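/- arXiv:2409.07032 — 6 statements merged into one kernel-verified Lean document; each statement's English description precedes it below -/
import Mathlib

section
/- Let f : R -> [0,\infty) be a probability density supported on [-1,1] with f(x) \ge c_d for all |x| \le 1, and let p(x,t) = (\varphi_t * f)(x) where \varphi_t is the density of N(0,t). Then for any constant C > 0 and all t \le 1 and all |x| \le 1 + C\sqrt{t}, one has p(x,t) \ge c_d \cdot P(C \le Z \le C+2) where Z ~ N(0,1). In particular p(x,t) is bounded below by a positive constant independent of x, t, f. -/
/-!
Dropping `f` outside `[-1, 1]` and bounding it below by `c_d` on `[-1, 1]` gives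
`p(x, t) ≥ c_d · P(x - 1 ≤ √t Z ≤ x + 1)`. The interval `[(x - 1)/√t, (x + 1)/√t]` has length
`2/√t ≥ 2`, starts left of `C` and ends right of `-C`, so it contains a window `[a, a + 2]` with
`-C - 2 ≤ a ≤ C`. Since the Gaussian density is even and decreasing in `|z|`, the mass of such a
window is smallest at the extreme positions `a = C` and `a = -C - 2`, which have equal mass.
-/

open MeasureTheory Real

/-- Density of `N(0,t)`. -/
noncomputable def gaussDensity (t x : ℝ) : ℝ :=
  (Real.sqrt (2 * Real.pi * t))⁻¹ * Real.exp (-x ^ 2 / (2 * t))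

/-- Standard Gaussian density. -/
noncomputable def stdGauss (x : ℝ) : ℝ := gaussDensity 1 x

open Set intervalIntegral

namespace Function.Even

variable {g : ℝ → ℝ}

theorem apply_le_apply_of_abs_le (hg : g.Even) (hanti : AntitoneOn g (Ici 0)) {x y : ℝ}
    (h : |x| ≤ |y|) : g y ≤ g x := by
  have habs : ∀ z, g |z| = g z := fun z => by
    rcases abs_choice z with hz | hz <;> rw [hz]; exact hg z
  rw [← habs x, ← habs y]
  exact hanti (abs_nonneg x) (abs_nonneg y) h

theorem integral_window_le_of_neg_half_le (hg : g.Even) (hanti : AntitoneOn g (Ici 0))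
    (hcont : Continuous g) {w a C : ℝ} (hw : 0 ≤ w) (ha : -(w / 2) ≤ a)
    (haC : a ≤ C) : ∫ z in C..C + w, g z ≤ ∫ z in a..a + w, g z := by
  have hii : ∀ u v, IntervalIntegrable g volume u v := hcont.intervalIntegrable
  have hshift : ∫ z in a + w..C + w, g z = ∫ z in a..C, g (z + w) :=
    (integral_comp_add_right g w).symm
  -- Mass moves from `[a, C]` to `[a + w, C + w]`, and `|z| ≤ |z + w|` there since `z ≥ -w/2`.
  have hcomp : ∫ z in a..C, g (z + w) ≤ ∫ z in a..C, g z := by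
    refine integral_mono_on haC ((hcont.comp (continuous_add_const w)).intervalIntegrable a C)
      (hii a C) fun z hz => hg.apply_le_apply_of_abs_le hanti ?_
    rw [abs_of_nonneg (by linarith [hz.1] : 0 ≤ z + w), abs_le]
    constructor <;> linarith [hz.1]
  linarith [integral_interval_sub_interval_comm (hii a (a + w)) (hii C (C + w)) (hii a C)]

theorem integral_window_le (hg : g.Even) (hanti : AntitoneOn g (Ici 0))
    (hcont : Continuous g) {w a C : ℝ} (hw : 0 ≤ w) (ha : -C - w ≤ a) (haC : a ≤ C) :
    ∫ z in C..C + w, g z ≤ ∫ z in a..a + w, g z := by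
  rcases le_total (-(w / 2)) a with hpos | hneg
  · exact hg.integral_window_le_of_neg_half_le hanti hcont hw hpos haC
  · have hrefl : ∫ z in a..a + w, g z = ∫ z in -a - w..-a - w + w, g z :=
      calc ∫ z in a..a + w, g z = ∫ z in a..a + w, g (-z) := by simp only [hg _]
        _ = ∫ z in -(a + w)..-a, g z := integral_comp_neg _
        _ = ∫ z in -a - w..-a - w + w, g z := by ring_nf
    rw [hrefl]
    exact hg.integral_window_le_of_neg_half_le hanti hcont hw (by linarith) (by linarith)

theorem integral_window_le_integral (hg : g.Even) (hanti : AntitoneOn g (Ici 0))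
    (hcont : Continuous g) (hg0 : ∀ z, 0 ≤ g z) {w α β C : ℝ} (hw : 0 ≤ w)
    (hα : α ≤ C) (hβ : -C ≤ β) (hαβ : α + w ≤ β) :
    ∫ z in C..C + w, g z ≤ ∫ z in α..β, g z := by
  have hmono : ∀ {u v}, α ≤ u → u ≤ v → v ≤ β → ∫ z in u..v, g z ≤ ∫ z in α..β, g z :=
    fun hu huv hv =>
      integral_mono_interval hu huv hv (.of_forall hg0) (hcont.intervalIntegrable _ _)
  rcases le_total (-(w / 2)) C with hC | hC
  · set a := max α (-C - w)
    calc ∫ z in C..C + w, g z ≤ ∫ z in a..a + w, g z :=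
          hg.integral_window_le hanti hcont hw (le_max_right _ _) (max_le hα (by linarith))
      _ ≤ ∫ z in α..β, g z :=
          hmono (le_max_left _ _) (by linarith)
            (le_sub_iff_add_le.mp (max_le (by linarith) (by linarith)))
  · -- here `[C, C + w] ⊆ [C, -C] ⊆ [α, β]`
    exact hmono hα (by linarith) (by linarith)

end Function.Even

theorem gaussDensity_nonneg (t x : ℝ) : 0 ≤ gaussDensity t x := by
  unfold gaussDensity; positivity

theorem gaussDensity_le (t x : ℝ) (ht : 0 ≤ t) :
    gaussDensity t x ≤ (Real.sqrt (2 * π * t))⁻¹ := by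
  refine mul_le_of_le_one_right (by positivity) (exp_le_one_iff.mpr ?_)
  exact div_nonpos_of_nonpos_of_nonneg (neg_nonpos.mpr (sq_nonneg x)) (by positivity)

theorem continuous_gaussDensity (t : ℝ) : Continuous (gaussDensity t) := by
  unfold gaussDensity; fun_prop

theorem stdGauss_eq (x : ℝ) : stdGauss x = (Real.sqrt (2 * π))⁻¹ * exp (-x ^ 2 / 2) := by
  simp [stdGauss, gaussDensity]

theorem stdGauss_pos (x : ℝ) : 0 < stdGauss x := by
  rw [stdGauss_eq]; positivity

theorem continuous_stdGauss : Continuous stdGauss := continuous_gaussDensity 1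

theorem stdGauss_even : stdGauss.Even := fun x => by
  simp only [stdGauss_eq, neg_sq]

theorem stdGauss_antitoneOn : AntitoneOn stdGauss (Ici 0) := fun x hx y _ hxy => by
  simp only [stdGauss_eq]
  gcongr

theorem sqrt_mul_gaussDensity_sqrt_mul {t : ℝ} (ht : 0 < t) (z : ℝ) :
    √t * gaussDensity t (√t * z) = stdGauss z := by
  have hs : 0 < √t := sqrt_pos.mpr ht
  rw [stdGauss_eq, gaussDensity, mul_pow, sq_sqrt ht.le, sqrt_mul (by positivity) t]
  field_simp

theorem integral_gaussDensity {t : ℝ} (ht : 0 < t) (a b : ℝ) :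
    ∫ y in a..b, gaussDensity t y = ∫ z in a / √t..b / √t, stdGauss z := by
  have hs : √t ≠ 0 := (sqrt_pos.mpr ht).ne'
  simp only [← sqrt_mul_gaussDensity_sqrt_mul ht, intervalIntegral.integral_const_mul,
    integral_comp_mul_left _ hs, smul_eq_mul, mul_div_cancel₀ _ hs, mul_inv_cancel_left₀ hs]

theorem setIntegral_Icc_gaussDensity_sub {t : ℝ} (ht : 0 < t) (x : ℝ) {a b : ℝ} (hab : a ≤ b) :
    ∫ μ in Icc a b, gaussDensity t (x - μ) = ∫ z in (x - b) / √t..(x - a) / √t, stdGauss z := by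
  rw [integral_Icc_eq_integral_Ioc, ← integral_of_le hab, integral_comp_sub_left (gaussDensity t),
    integral_gaussDensity ht]

theorem integrable_gaussDensity_sub_mul {t : ℝ} (ht : 0 ≤ t) (x : ℝ) {f : ℝ → ℝ}
    (hf : Integrable f) : Integrable fun μ => gaussDensity t (x - μ) * f μ :=
  hf.bdd_mul ((continuous_gaussDensity t).comp (continuous_sub_left x)).aestronglyMeasurable
    (.of_forall fun μ => by
      rw [norm_of_nonneg (gaussDensity_nonneg t _)]; exact gaussDensity_le t _ ht)

theorem mul_setIntegral_le_integral_mul {k f : ℝ → ℝ} {s : Set ℝ} {c : ℝ}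
    (hs : MeasurableSet s) (hk0 : ∀ μ, 0 ≤ k μ) (hf0 : ∀ μ, 0 ≤ f μ) (hk : IntegrableOn k s)
    (hkf : Integrable fun μ => k μ * f μ) (hlb : ∀ μ ∈ s, c ≤ f μ) :
    c * ∫ μ in s, k μ ≤ ∫ μ, k μ * f μ :=
  calc c * ∫ μ in s, k μ = ∫ μ in s, k μ * c := by
        rw [MeasureTheory.integral_mul_const, mul_comm]
    _ ≤ ∫ μ in s, k μ * f μ :=
        setIntegral_mono_on (hk.mul_const c) hkf.integrableOn hs
          fun μ hμ => mul_le_mul_of_nonneg_left (hlb μ hμ) (hk0 μ)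
    _ ≤ ∫ μ, k μ * f μ :=
        setIntegral_le_integral hkf (.of_forall fun μ => mul_nonneg (hk0 μ) (hf0 μ))

theorem diffused_density_lower_bound_general
    (f : ℝ → ℝ) (c_d : ℝ) (hc : 0 < c_d)
    (hf0 : ∀ x, 0 ≤ f x)
    (hfint : ∫ x, f x = 1)
    (hlb : ∀ x ∈ Set.Icc (-1 : ℝ) 1, c_d ≤ f x)
    (C t x : ℝ) (ht0 : 0 < t) (ht1 : t ≤ 1)
    (hx : |x| ≤ 1 + C * Real.sqrt t) :
    c_d * (∫ z in Set.Icc C (C + 2), stdGauss z)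
        ≤ ∫ μ, gaussDensity t (x - μ) * f μ ∧
    0 < c_d * (∫ z in Set.Icc C (C + 2), stdGauss z) := by
  have hs : 0 < √t := sqrt_pos.mpr ht0
  have hs1 : √t ≤ 1 := (sqrt_le_sqrt ht1).trans_eq sqrt_one
  obtain ⟨hxl, hxr⟩ := abs_le.mp hx
  have hwindow : ∫ z in Icc C (C + 2), stdGauss z = ∫ z in C..C + 2, stdGauss z := by
    rw [integral_Icc_eq_integral_Ioc, integral_of_le (by linarith)]
  have hgauss : ∫ z in C..C + 2, stdGauss z ≤ ∫ z in (x - 1) / √t..(x + 1) / √t, stdGauss z :=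
    stdGauss_even.integral_window_le_integral stdGauss_antitoneOn continuous_stdGauss
      (fun z => (stdGauss_pos z).le) zero_le_two
      ((div_le_iff₀ hs).mpr (by linarith)) ((le_div_iff₀ hs).mpr (by linarith))
      (by rw [div_add' _ _ _ hs.ne', div_le_div_iff_of_pos_right hs]; linarith)
  refine ⟨?_, mul_pos hc ?_⟩
  · calc c_d * ∫ z in Icc C (C + 2), stdGauss z
        ≤ c_d * ∫ μ in Icc (-1) 1, gaussDensity t (x - μ) := by
          rw [hwindow, setIntegral_Icc_gaussDensity_sub ht0 x (by norm_num), sub_neg_eq_add]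
          gcongr
      _ ≤ ∫ μ, gaussDensity t (x - μ) * f μ :=
          mul_setIntegral_le_integral_mul measurableSet_Icc (fun μ => gaussDensity_nonneg t _) hf0
            ((continuous_gaussDensity t).comp (continuous_sub_left x)).integrableOn_Icc
            (integrable_gaussDensity_sub_mul ht0.le x (integrable_of_integral_eq_one hfint)) hlb
  · rw [hwindow]
    exact intervalIntegral_pos_of_pos_on (continuous_stdGauss.intervalIntegrable _ _)
      (fun z _ => stdGauss_pos z) (by linarith)

/-- If `f` is a probability density supported on `[-1,1]` with `f ≥ c_d` there, then the
diffused density `p(x,t) = (φ_t * f)(x)` satisfies, for any `C > 0`, all `0 < t ≤ 1` and all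
`|x| ≤ 1 + C√t`, the lower bound `p(x,t) ≥ c_d · P(C ≤ Z ≤ C+2)`, a positive constant
independent of `x`, `t`, `f`. -/
theorem diffused_density_lower_bound
    (f : ℝ → ℝ) (c_d : ℝ) (hc : 0 < c_d)
    (hf0 : ∀ x, 0 ≤ f x) (hmeas : Measurable f)
    (hsupp : ∀ x, x ∉ Set.Icc (-1 : ℝ) 1 → f x = 0)
    (hfint : ∫ x, f x = 1)
    (hlb : ∀ x ∈ Set.Icc (-1 : ℝ) 1, c_d ≤ f x)
    (C t x : ℝ) (hC : 0 < C) (ht0 : 0 < t) (ht1 : t ≤ 1)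
    (hx : |x| ≤ 1 + C * Real.sqrt t) :
    c_d * (∫ z in Set.Icc C (C + 2), stdGauss z)
        ≤ ∫ μ, gaussDensity t (x - μ) * f μ ∧
    0 < c_d * (∫ z in Set.Icc C (C + 2), stdGauss z) :=
  diffused_density_lower_bound_general f c_d hc hf0 hfint hlb C t x ht0 ht1 hx
end

section
/- Let f be a probability density supported on [-1,1], let p(x,t) = (\varphi_t * f)(x) and s(x,t) = \partial_x \log p(x,t). Then for all x \in R and all t > 0, s(x,t)^2 \le (2/t) \log(1/(\sqrt{2\pi t} \cdot p(x,t))). -/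
open MeasureTheory Real

/-! With `φ(θ) = -(x-θ)²/(2t)` and prior `ν`, `p = (2πt)^{-1/2} ∫ e^φ dν` and
`t s = ∫ (θ-x) e^φ dν / ∫ e^φ dν` is the posterior mean of `θ - x` (Tweedie). Cauchy–Schwarz gives
`t² s² ≤ ∫ (θ-x)² e^φ / ∫ e^φ = -2t ∫ φ e^φ / ∫ e^φ`, and Jensen's inequality for the convex
`y ↦ y log y` at `y = e^φ` gives `∫ φ e^φ ≥ (∫ e^φ) log ∫ e^φ = (∫ e^φ) log (√(2πt) p)`. -/

section

variable {α : Type*} [MeasurableSpace α] {μ : Measure α}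

theorem sq_integral_mul_le_integral_sq_mul_mul_integral {g w : α → ℝ} (hw : ∀ a, 0 ≤ w a)
    (hw_int : Integrable w μ) (hgw : Integrable (fun a => g a * w a) μ)
    (hg2w : Integrable (fun a => g a ^ 2 * w a) μ) :
    (∫ a, g a * w a ∂μ) ^ 2 ≤ (∫ a, g a ^ 2 * w a ∂μ) * ∫ a, w a ∂μ := by
  have hquad : ∀ c : ℝ, 0 ≤ (∫ a, w a ∂μ) * (c * c) + (-2 * ∫ a, g a * w a ∂μ) * c
      + ∫ a, g a ^ 2 * w a ∂μ := by
    intro c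
    have hexpand : ∀ a, (c - g a) ^ 2 * w a
        = c * c * w a + -2 * c * (g a * w a) + g a ^ 2 * w a := fun a => by ring
    have h : 0 ≤ ∫ a, (c - g a) ^ 2 * w a ∂μ :=
      integral_nonneg fun a => mul_nonneg (sq_nonneg (c - g a)) (hw a)
    simp only [hexpand] at h
    rw [integral_add ((hw_int.const_mul _).fun_add (hgw.const_mul _)) hg2w,
      integral_add (hw_int.const_mul _) (hgw.const_mul _), integral_const_mul,
      integral_const_mul] at h
    linarith
  have h := discrim_le_zero hquad
  rw [discrim] at h
  linarith

theorem integrable_exp_of_nonpos [IsFiniteMeasure μ] {φ : α → ℝ}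
    (hφ : AEStronglyMeasurable φ μ) (hφ0 : ∀ a, φ a ≤ 0) :
    Integrable (fun a => exp (φ a)) μ :=
  .of_bound (continuous_exp.comp_aestronglyMeasurable hφ) 1 <| ae_of_all _ fun a => by
    rw [norm_of_nonneg (exp_pos _).le]
    exact exp_le_one_iff.2 (hφ0 a)

theorem integrable_mul_exp_of_nonpos [IsFiniteMeasure μ] {φ : α → ℝ}
    (hφ : AEStronglyMeasurable φ μ) (hφ0 : ∀ a, φ a ≤ 0) :
    Integrable (fun a => φ a * exp (φ a)) μ :=
  .of_bound (hφ.mul (continuous_exp.comp_aestronglyMeasurable hφ)) 1 <| ae_of_all _ fun a => by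
    have h := mul_exp_neg_le_exp_neg_one (-φ a)
    rw [neg_neg] at h
    rw [norm_mul, norm_of_nonneg (exp_pos _).le, norm_of_nonpos (hφ0 a)]
    exact h.trans (exp_le_one_iff.2 (by norm_num))

theorem integral_exp_mul_log_integral_exp_le [IsProbabilityMeasure μ] {φ : α → ℝ}
    (hφ : AEStronglyMeasurable φ μ) (hφ0 : ∀ a, φ a ≤ 0) :
    (∫ a, exp (φ a) ∂μ) * log (∫ a, exp (φ a) ∂μ) ≤ ∫ a, φ a * exp (φ a) ∂μ := by
  have hcomp : ((fun y => y * log y) ∘ fun a => exp (φ a)) = fun a => φ a * exp (φ a) := by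
    ext a
    rw [Function.comp_apply, log_exp, mul_comm]
  refine (convexOn_mul_log.map_integral_le continuous_mul_log.continuousOn isClosed_Ici
    (ae_of_all _ fun a => (exp_pos (φ a)).le) (integrable_exp_of_nonpos hφ hφ0) ?_).trans_eq ?_
  · rw [hcomp]
    exact integrable_mul_exp_of_nonpos hφ hφ0
  · rw [← hcomp]
    rfl

theorem isProbabilityMeasure_withDensity_ofReal {f : α → ℝ} (hf0 : ∀ a, 0 ≤ f a)
    (hf : Integrable f μ) (hf1 : ∫ a, f a ∂μ = 1) :
    IsProbabilityMeasure (μ.withDensity fun a => ENNReal.ofReal (f a)) :=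
  ⟨by rw [withDensity_apply _ MeasurableSet.univ, Measure.restrict_univ,
    ← ofReal_integral_eq_lintegral_ofReal hf (ae_of_all _ hf0), hf1, ENNReal.ofReal_one]⟩

theorem integral_withDensity_ofReal_eq_integral_mul {f : α → ℝ} (hf0 : ∀ a, 0 ≤ f a)
    (hf : AEMeasurable f μ) (g : α → ℝ) :
    ∫ a, g a ∂(μ.withDensity fun a => ENNReal.ofReal (f a)) = ∫ a, g a * f a ∂μ := by
  rw [integral_withDensity_eq_integral_toReal_smul₀ hf.ennreal_ofReal
    (ae_of_all _ fun _ => ENNReal.ofReal_lt_top)]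
  congr 1 with a
  rw [ENNReal.toReal_ofReal (hf0 a), smul_eq_mul, mul_comm]

end

theorem sq_integral_sub_mul_gaussian_le (ν : Measure ℝ) [IsProbabilityMeasure ν] {t : ℝ}
    (ht : 0 < t) (x : ℝ) :
    (∫ θ, (θ - x) * exp (-(x - θ) ^ 2 / (2 * t)) ∂ν) ^ 2
      ≤ -(2 * t) * (∫ θ, exp (-(x - θ) ^ 2 / (2 * t)) ∂ν) ^ 2
          * log (∫ θ, exp (-(x - θ) ^ 2 / (2 * t)) ∂ν) := by
  set φ : ℝ → ℝ := fun θ => -(x - θ) ^ 2 / (2 * t) with hφ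
  have hφ0 : ∀ θ, φ θ ≤ 0 := fun θ =>
    div_nonpos_of_nonpos_of_nonneg (neg_nonpos.2 (sq_nonneg _)) (by positivity)
  have hφ_meas : AEStronglyMeasurable φ ν := by fun_prop
  have hsq : ∀ θ, (θ - x) ^ 2 * exp (φ θ) = -(2 * t) * (φ θ * exp (φ θ)) := fun θ => by
    simp only [hφ]
    field_simp
    ring
  set I0 := ∫ θ, exp (φ θ) ∂ν
  set I1 := ∫ θ, (θ - x) * exp (φ θ) ∂ν
  set I2 := ∫ θ, (θ - x) ^ 2 * exp (φ θ) ∂ν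
  have hint0 := integrable_exp_of_nonpos hφ_meas hφ0
  have hint2 : Integrable (fun θ => (θ - x) ^ 2 * exp (φ θ)) ν := by
    simp only [hsq]
    exact (integrable_mul_exp_of_nonpos hφ_meas hφ0).const_mul _
  have hint1 : Integrable (fun θ => (θ - x) * exp (φ θ)) ν :=
    (hint0.fun_add hint2).mono' (by fun_prop) <| ae_of_all _ fun θ => by
      have habs : |θ - x| ≤ 1 + (θ - x) ^ 2 := by nlinarith [sq_abs (θ - x), abs_nonneg (θ - x)]
      rw [norm_mul, norm_of_nonneg (exp_pos _).le, Real.norm_eq_abs]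
      nlinarith [exp_pos (φ θ)]
  have hCS : I1 ^ 2 ≤ I2 * I0 :=
    sq_integral_mul_le_integral_sq_mul_mul_integral (fun θ => (exp_pos _).le) hint0 hint1 hint2
  have hI2 : I2 = -(2 * t) * ∫ θ, φ θ * exp (φ θ) ∂ν := by
    simp only [I2, hsq]
    exact integral_const_mul _ _
  have hJensen : I0 * log I0 ≤ ∫ θ, φ θ * exp (φ θ) ∂ν :=
    integral_exp_mul_log_integral_exp_le hφ_meas hφ0
  calc I1 ^ 2 ≤ I2 * I0 := hCS
    _ ≤ -(2 * t) * (I0 * log I0) * I0 := by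
      rw [hI2]
      gcongr ?_ * I0
      nlinarith
    _ = -(2 * t) * I0 ^ 2 * log I0 := by ring

theorem sq_score_le_of_isProbabilityMeasure (ν : Measure ℝ) [IsProbabilityMeasure ν] {t : ℝ}
    (ht : 0 < t) (x : ℝ) :
    ((∫ θ, (-(x - θ) / t) * gaussDensity t (x - θ) ∂ν) / (∫ θ, gaussDensity t (x - θ) ∂ν)) ^ 2
      ≤ (2 / t) * log (1 / (sqrt (2 * π * t) * ∫ θ, gaussDensity t (x - θ) ∂ν)) := by
  set I0 := ∫ θ, exp (-(x - θ) ^ 2 / (2 * t)) ∂ν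
  set I1 := ∫ θ, (θ - x) * exp (-(x - θ) ^ 2 / (2 * t)) ∂ν
  have hI0 : 0 < I0 := integral_exp_pos (integrable_exp_of_nonpos (by fun_prop) fun θ =>
    div_nonpos_of_nonpos_of_nonneg (neg_nonpos.2 (sq_nonneg _)) (by positivity))
  have hs : 0 < sqrt (2 * π * t) := sqrt_pos.2 (by positivity)
  have hp : ∫ θ, gaussDensity t (x - θ) ∂ν = (sqrt (2 * π * t))⁻¹ * I0 :=
    integral_const_mul _ _
  have hp' : ∫ θ, (-(x - θ) / t) * gaussDensity t (x - θ) ∂ν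
      = (sqrt (2 * π * t))⁻¹ / t * I1 := by
    rw [← integral_const_mul]
    congr 1 with θ
    simp only [gaussDensity]
    ring
  rw [hp, hp', mul_inv_cancel_left₀ hs.ne', one_div, log_inv,
    show (sqrt (2 * π * t))⁻¹ / t * I1 / ((sqrt (2 * π * t))⁻¹ * I0) = I1 / (t * I0) by
      field_simp,
    div_pow, div_le_iff₀ (by positivity)]
  calc I1 ^ 2 ≤ -(2 * t) * I0 ^ 2 * log I0 := sq_integral_sub_mul_gaussian_le ν ht x
    _ = 2 / t * -log I0 * (t * I0) ^ 2 := by field_simp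

theorem score_upper_bound_general
    (f : ℝ → ℝ) (hf0 : ∀ x, 0 ≤ f x)
    (hfint : ∫ x, f x = 1)
    (t x : ℝ) (ht : 0 < t) :
    ((∫ μ, (-(x - μ) / t) * gaussDensity t (x - μ) * f μ) /
        (∫ μ, gaussDensity t (x - μ) * f μ)) ^ 2
      ≤ (2 / t) *
        Real.log (1 / (Real.sqrt (2 * Real.pi * t) * ∫ μ, gaussDensity t (x - μ) * f μ)) := by
  have hf : Integrable f := .of_integral_ne_zero (by rw [hfint]; exact one_ne_zero)
  have := isProbabilityMeasure_withDensity_ofReal hf0 hf hfint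
  simp only [← integral_withDensity_ofReal_eq_integral_mul hf0 hf.aemeasurable]
  exact sq_score_le_of_isProbabilityMeasure _ ht x

/-- For a probability density `f` supported on `[-1,1]`, with `p(x,t) = (φ_t * f)(x)` and score
`s(x,t) = (∂_x p(x,t))/p(x,t)` (the spatial derivative being `(φ_t' * f)(x)`), one has
`s(x,t)² ≤ (2/t)·log(1/(√(2πt)·p(x,t)))` for all `x ∈ ℝ` and `t > 0`. -/
theorem score_upper_bound
    (f : ℝ → ℝ) (hf0 : ∀ x, 0 ≤ f x) (hmeas : Measurable f)
    (hsupp : ∀ x, x ∉ Set.Icc (-1 : ℝ) 1 → f x = 0)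
    (hfint : ∫ x, f x = 1)
    (t x : ℝ) (ht : 0 < t) :
    ((∫ μ, (-(x - μ) / t) * gaussDensity t (x - μ) * f μ) /
        (∫ μ, gaussDensity t (x - μ) * f μ)) ^ 2
      ≤ (2 / t) *
        Real.log (1 / (Real.sqrt (2 * Real.pi * t) * ∫ μ, gaussDensity t (x - μ) * f μ)) :=
  score_upper_bound_general f hf0 hfint t x ht
end

section
/- For any two probability densities p and q on R (or R^d), KL(p || q) \ge c \cdot \chi^2(p || (p+q)/2) for some universal constant c > 0; in particular one may take the bound KL(p||q) \ge 2\log(2) \cdot \chi^2(p || (p+q)/2). -/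
/-!
Pointwise, with `m = (p + q) / 2` and `t = p / q`, one has
`2 log 2 · (p - m)² / m ≤ p log (p / q) - (p - q)`, which is `q` times
`log 2 · (t - 1)² / (t + 1) ≤ t log t - t + 1`; integrating, `∫ (p - q) = 0`.
The difference of the two sides of the latter vanishes together with its derivative at `t = 1`
and is convex on `[0, ∞)`: its second derivative `1 / t - 8 log 2 / (t + 1)³` is nonnegative
since `(t + 1)³ ≥ 27 t / 4 ≥ 8 log 2 · t`.
-/

open MeasureTheory Real Set

-- `(t - 1)² / (t + 1)` is written as `t - 3 + 4 / (t + 1)` to ease differentiation.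
noncomputable def klChiSqGap (t : ℝ) : ℝ := t * log t - t + 1 - log 2 * (t - 3 + 4 / (t + 1))

lemma hasDerivAt_klChiSqGap {t : ℝ} (ht : 0 < t) :
    HasDerivAt klChiSqGap (log t - log 2 + 4 * log 2 / (t + 1) ^ 2) t := by
  have hrecip := (hasDerivAt_const t (4 : ℝ)).div ((hasDerivAt_id t).add_const 1)
    (by positivity : t + 1 ≠ 0)
  refine ((((hasDerivAt_mul_log ht.ne').sub (hasDerivAt_id t)).add_const 1).sub
    ((((hasDerivAt_id t).sub_const 3).add hrecip).const_mul (log 2))).congr_deriv ?_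
  simp only [id]; ring

lemma hasDerivAt_klChiSqGap_deriv {t : ℝ} (ht : 0 < t) :
    HasDerivAt (fun t => log t - log 2 + 4 * log 2 / (t + 1) ^ 2)
      (t⁻¹ - 8 * log 2 / (t + 1) ^ 3) t := by
  have hrecip := (hasDerivAt_const t (4 * log 2)).div (((hasDerivAt_id t).add_const 1).pow 2)
    (by simp only [id, Pi.pow_apply]; positivity)
  refine (((hasDerivAt_log ht.ne').sub_const (log 2)).add hrecip).congr_deriv ?_
  simp only [id, Pi.pow_apply]; field_simp; ring

lemma convexOn_klChiSqGap : ConvexOn ℝ (Ici 0) klChiSqGap := by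
  refine convexOn_of_hasDerivWithinAt2_nonneg (convex_Ici 0) ?_
    (fun t ht => (hasDerivAt_klChiSqGap (by simpa using ht)).hasDerivWithinAt)
    (fun t ht => (hasDerivAt_klChiSqGap_deriv (by simpa using ht)).hasDerivWithinAt) ?_
  · unfold klChiSqGap
    have : ContinuousOn (fun t : ℝ => 4 / (t + 1)) (Ici 0) :=
      continuousOn_const.div (by fun_prop) (fun t ht => (by linarith [mem_Ici.mp ht] : (0 : ℝ) < t + 1).ne')
    exact ((continuous_mul_log.sub continuous_id).add continuous_const).continuousOn.sub
      (((continuousOn_id.sub continuousOn_const).add this).const_smul (log 2))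
  · intro t ht
    rw [interior_Ici, mem_Ioi] at ht
    -- `(t + 1)³ - 27 t / 4 = (2 t - 1)² (t + 4) / 4`
    have hlog : log 2 < 27 / 32 := by linarith [log_two_lt_d9]
    rw [sub_nonneg, div_le_iff₀ (by positivity), ← div_eq_inv_mul, le_div_iff₀ ht]
    nlinarith [sq_nonneg (2 * t - 1), log_pos one_lt_two]

lemma klChiSqGap_nonneg {t : ℝ} (ht : 0 ≤ t) : 0 ≤ klChiSqGap t := by
  have hderiv : derivWithin klChiSqGap (Ioi 1) 1 = 0 := by
    rw [(hasDerivAt_klChiSqGap one_pos).hasDerivWithinAt.derivWithin (uniqueDiffWithinAt_Ioi 1)]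
    norm_num
  have hmin := convexOn_klChiSqGap.isMinOn_of_rightDeriv_eq_zero (by simp) hderiv
  have hzero : klChiSqGap 1 = 0 := by norm_num [klChiSqGap]
  simpa [hzero] using hmin (mem_Ici.mpr ht)

lemma two_mul_log_two_mul_chiSq_le {a b : ℝ} (ha : 0 ≤ a) (hb : 0 < b) :
    2 * log 2 * ((a - (a + b) / 2) ^ 2 / ((a + b) / 2)) ≤ a * log (a / b) - (a - b) := by
  have hgap : b * klChiSqGap (a / b)
      = a * log (a / b) - (a - b) - 2 * log 2 * ((a - (a + b) / 2) ^ 2 / ((a + b) / 2)) := by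
    have : a + b ≠ 0 := by positivity
    unfold klChiSqGap
    field_simp
    ring
  linarith [mul_nonneg hb.le (klChiSqGap_nonneg (div_nonneg ha hb.le))]

theorem kl_chisq_half_general
    (p q : ℝ → ℝ) (hp0 : ∀ x, 0 ≤ p x) (hq0 : ∀ x, 0 < q x)
    (hpint : ∫ x, p x = 1) (hqint : ∫ x, q x = 1)
    (hKL : Integrable (fun x => p x * Real.log (p x / q x)))
    (hchi : Integrable (fun x => (p x - (p x + q x) / 2) ^ 2 / ((p x + q x) / 2))) :
    2 * Real.log 2 * (∫ x, (p x - (p x + q x) / 2) ^ 2 / ((p x + q x) / 2))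
      ≤ ∫ x, p x * Real.log (p x / q x) := by
  have hp : Integrable p := .of_integral_ne_zero (by simp [hpint])
  have hq : Integrable q := .of_integral_ne_zero (by simp [hqint])
  have hpq : Integrable fun x => p x - q x := hp.sub hq
  calc 2 * log 2 * (∫ x, (p x - (p x + q x) / 2) ^ 2 / ((p x + q x) / 2))
      = ∫ x, 2 * log 2 * ((p x - (p x + q x) / 2) ^ 2 / ((p x + q x) / 2)) :=
        (integral_const_mul _ _).symm
    _ ≤ ∫ x, (p x * log (p x / q x) - (p x - q x)) :=
        integral_mono (hchi.const_mul _) (hKL.sub hpq)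
          fun x => two_mul_log_two_mul_chiSq_le (hp0 x) (hq0 x)
    _ = ∫ x, p x * log (p x / q x) := by
        rw [integral_sub hKL hpq, integral_sub hp hq, hpint, hqint, sub_self, sub_zero]

/-- For any two probability densities `p` and `q` on `ℝ` (with `q` positive, and with the KL
and chi-squared integrands integrable), one has
`KL(p ‖ q) ≥ 2 log 2 · χ²(p ‖ (p+q)/2)`, where `KL(p‖q) = ∫ p log(p/q)` and
`χ²(p‖r) = ∫ (p-r)²/r`; in particular `KL(p‖q) ≥ c · χ²(p ‖ (p+q)/2)` for a universal
constant `c > 0`. -/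
theorem kl_chisq_half
    (p q : ℝ → ℝ) (hp0 : ∀ x, 0 ≤ p x) (hq0 : ∀ x, 0 < q x)
    (hpm : Measurable p) (hqm : Measurable q)
    (hpint : ∫ x, p x = 1) (hqint : ∫ x, q x = 1)
    (hKL : Integrable (fun x => p x * Real.log (p x / q x)))
    (hchi : Integrable (fun x => (p x - (p x + q x) / 2) ^ 2 / ((p x + q x) / 2))) :
    2 * Real.log 2 * (∫ x, (p x - (p x + q x) / 2) ^ 2 / ((p x + q x) / 2))
      ≤ ∫ x, p x * Real.log (p x / q x) :=
  kl_chisq_half_general p q hp0 hq0 hpint hqint hKL hchi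
end

section
/- Let X and Y be random variables such that Y is supported in [-C, C] for a constant C > 0. Then E[Y^2] \le K(E[X^2] + KL(X || Y)) for a constant K depending only on C, where KL(X||Y) denotes the Kullback-Leibler divergence between the laws of X and Y. -/
open MeasureTheory Real

/-- Kullback–Leibler divergence `KL(μ ‖ ν) = ∫ log(dμ/dν) dμ`. -/
noncomputable def klDiv {α : Type*} [MeasurableSpace α] (μ ν : Measure α) : ℝ :=
  ∫ x, Real.log ((μ.rnDeriv ν x).toReal) ∂μ

lemma aux_g_nonneg (p : ℝ) (hp : 0 ≤ p) : 0 ≤ p * Real.log p + 1 - p := by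
  rcases eq_or_lt_of_le hp with h | h
  · simp [← h]
  · have h1 : Real.log (1 / p) ≤ 1 / p - 1 := Real.log_le_sub_one_of_pos (by positivity)
    rw [Real.log_div one_ne_zero h.ne', Real.log_one] at h1
    have : p * (0 - Real.log p) ≤ p * (1 / p - 1) := by
      apply mul_le_mul_of_nonneg_left _ hp
      simpa using h1
    rw [mul_sub] at this
    have hp' : p * (1 / p) = 1 := by field_simp
    nlinarith

lemma aux_plogp (p : ℝ) (hp : 0 < p) : -(3 / 8 : ℝ) ≤ p * Real.log p := by
  have he : (8 : ℝ) / 3 < Real.exp 1 := by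
    have := Real.exp_one_gt_d9
    norm_num at this ⊢
    linarith
  have hep : 0 < Real.exp 1 * p := by positivity
  have h1 : Real.log (1 / (Real.exp 1 * p)) ≤ 1 / (Real.exp 1 * p) - 1 :=
    Real.log_le_sub_one_of_pos (by positivity)
  rw [Real.log_div one_ne_zero hep.ne', Real.log_mul (Real.exp_pos 1).ne' hp.ne',
    Real.log_exp, Real.log_one] at h1
  -- h1 : 0 - (1 + log p) ≤ 1/(e p) - 1, so -log p ≤ 1/(e p), so -p log p ≤ 1/e ≤ 3/8
  have h2 : p * (0 - (1 + Real.log p)) ≤ p * (1 / (Real.exp 1 * p) - 1) :=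
    mul_le_mul_of_nonneg_left h1 hp.le
  have h3 : p * (1 / (Real.exp 1 * p)) = 1 / Real.exp 1 := by field_simp
  have h4 : 1 / Real.exp 1 ≤ 3 / 8 := by
    rw [div_le_div_iff₀ (Real.exp_pos 1) (by norm_num)]
    linarith
  nlinarith

lemma aux_main (f p : ℝ) (hf0 : 0 ≤ f) (hf1 : f ≤ 1) (hp : 0 ≤ p) :
    f ≤ 2 * (f * p) + 8 * (p * Real.log p + 1 - p) := by
  have hg := aux_g_nonneg p hp
  rcases le_or_gt (1 / 2 : ℝ) p with h | h
  · nlinarith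
  · rcases eq_or_lt_of_le hp with h0 | h0
    · simp [← h0]; linarith
    · have := aux_plogp p h0
      nlinarith

/-- If `Y` is supported in `[-C, C]`, then `E[Y²] ≤ K (E[X²] + KL(X ‖ Y))` for a constant `K`
depending only on `C`, where `μ` is the law of `X` and `ν` is the law of `Y` (with `μ ≪ ν` and
the KL integrand integrable, i.e. the KL divergence finite). -/
theorem second_moment_transfer (C : ℝ) (hC : 0 < C) :
    ∃ K : ℝ, 0 < K ∧ ∀ (μ ν : Measure ℝ),
      IsProbabilityMeasure μ → IsProbabilityMeasure ν →
      μ ≪ ν →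
      Integrable (fun x => Real.log ((μ.rnDeriv ν x).toReal)) μ →
      Integrable (fun x : ℝ => x ^ 2) μ →
      ν (Set.Icc (-C) C)ᶜ = 0 →
      (∫ y, y ^ 2 ∂ν) ≤ K * ((∫ x, x ^ 2 ∂μ) + klDiv μ ν) := by
  refine ⟨2 + 8 * C ^ 2, by positivity, fun μ ν hμ hν hμν hlog hx2 hsupp => ?_⟩
  set p : ℝ → ℝ := fun x => (μ.rnDeriv ν x).toReal with hp_def
  have hp_meas : Measurable p := (Measure.measurable_rnDeriv μ ν).ennreal_toReal
  have hp_nonneg : ∀ x, 0 ≤ p x := fun x => ENNReal.toReal_nonneg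
  set f : ℝ → ℝ := fun x => min (x ^ 2) (C ^ 2) / C ^ 2 with hf_def
  have hf_meas : Measurable f := ((measurable_id.pow_const 2).min measurable_const).div_const _
  have hf0 : ∀ x, 0 ≤ f x := fun x => by
    apply div_nonneg _ (by positivity)
    exact le_min (sq_nonneg x) (by positivity)
  have hf1 : ∀ x, f x ≤ 1 := fun x => by
    rw [div_le_one (by positivity)]
    exact min_le_right _ _
  -- integrability facts
  have hf_int : ∀ (m : Measure ℝ) [IsProbabilityMeasure m], Integrable f m := by
    intro m _
    refine (integrable_const (1 : ℝ)).mono' hf_meas.aestronglyMeasurable ?_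
    filter_upwards with x
    rw [Real.norm_eq_abs, abs_of_nonneg (hf0 x)]
    exact hf1 x
  have hfp_int : Integrable (fun x => f x * p x) ν := by
    have h : Integrable (fun x => p x • f x) ν :=
      (MeasureTheory.integrable_rnDeriv_smul_iff hμν).mpr (hf_int μ)
    simpa [mul_comm] using h
  have hplogp_int : Integrable (fun x => p x * Real.log (p x)) ν := by
    have h : Integrable (fun x => p x • Real.log (p x)) ν :=
      (MeasureTheory.integrable_rnDeriv_smul_iff hμν).mpr hlog
    simpa using h
  have hp_int : Integrable p ν := Measure.integrable_toReal_rnDeriv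
  have hA_int : Integrable (fun x => 2 * (f x * p x)) ν := hfp_int.const_mul 2
  have hC_int : Integrable (fun x => p x * Real.log (p x) + 1) ν :=
    hplogp_int.add (integrable_const 1)
  have hD_int : Integrable (fun x => p x * Real.log (p x) + 1 - p x) ν := hC_int.sub hp_int
  have hB_int : Integrable (fun x => 8 * (p x * Real.log (p x) + 1 - p x)) ν :=
    hD_int.const_mul 8
  -- integral identities
  have hfp_eq : ∫ x, f x * p x ∂ν = ∫ x, f x ∂μ := by
    rw [← MeasureTheory.integral_rnDeriv_smul (f := f) hμν]
    congr 1
    ext x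
    simp [hp_def, mul_comm]
  have hplogp_eq : ∫ x, p x * Real.log (p x) ∂ν = klDiv μ ν := by
    have h := MeasureTheory.integral_rnDeriv_smul
      (f := fun x => Real.log ((μ.rnDeriv ν x).toReal)) hμν
    simpa [klDiv] using h
  have hp_eq : ∫ x, p x ∂ν = 1 := by
    rw [hp_def, Measure.integral_toReal_rnDeriv hμν]
    simp
  have hD_eq : ∫ x, p x * Real.log (p x) + 1 - p x ∂ν = klDiv μ ν := by
    rw [integral_sub hC_int hp_int, integral_add hplogp_int (integrable_const 1),
      hplogp_eq, hp_eq]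
    simp
  -- main pointwise bound integrated
  have key : ∫ x, f x ∂ν ≤ 2 * ∫ x, f x ∂μ + 8 * klDiv μ ν := by
    have hle : ∫ x, f x ∂ν ≤
        ∫ x, 2 * (f x * p x) + 8 * (p x * Real.log (p x) + 1 - p x) ∂ν := by
      apply integral_mono (hf_int ν) (hA_int.add hB_int)
      intro x
      exact aux_main (f x) (p x) (hf0 x) (hf1 x) (hp_nonneg x)
    calc ∫ x, f x ∂ν
        ≤ ∫ x, 2 * (f x * p x) + 8 * (p x * Real.log (p x) + 1 - p x) ∂ν := hle
      _ = 2 * ∫ x, f x ∂μ + 8 * klDiv μ ν := by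
          rw [integral_add hA_int hB_int, integral_const_mul, integral_const_mul,
            hfp_eq, hD_eq]
  -- KL nonneg
  have hKL : 0 ≤ klDiv μ ν := by
    rw [← hD_eq]
    exact integral_nonneg fun x => aux_g_nonneg (p x) (hp_nonneg x)
  -- relate ∫ y² dν to ∫ f dν
  have hy2 : ∫ y, y ^ 2 ∂ν = C ^ 2 * ∫ x, f x ∂ν := by
    rw [← integral_const_mul]
    apply integral_congr_ae
    have hae : ∀ᵐ y ∂ν, y ∈ Set.Icc (-C) C := by
      rw [ae_iff]
      exact hsupp
    filter_upwards [hae] with y hy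
    have hle : y ^ 2 ≤ C ^ 2 := sq_le_sq' hy.1 hy.2
    rw [hf_def]
    simp only []
    rw [min_eq_left hle]
    field_simp
  -- relate ∫ f dμ to ∫ x² dμ
  have hfμ : C ^ 2 * ∫ x, f x ∂μ ≤ ∫ x, x ^ 2 ∂μ := by
    rw [← integral_const_mul]
    apply integral_mono ((hf_int μ).const_mul _) hx2
    intro x
    rw [hf_def]
    simp only []
    rw [show C ^ 2 * (min (x ^ 2) (C ^ 2) / C ^ 2) = min (x ^ 2) (C ^ 2) by field_simp]
    exact min_le_left _ _
  have hx2_nonneg : 0 ≤ ∫ x, x ^ 2 ∂μ := integral_nonneg fun x => sq_nonneg x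
  calc ∫ y, y ^ 2 ∂ν = C ^ 2 * ∫ x, f x ∂ν := hy2
    _ ≤ C ^ 2 * (2 * ∫ x, f x ∂μ + 8 * klDiv μ ν) :=
        mul_le_mul_of_nonneg_left key (by positivity)
    _ = 2 * (C ^ 2 * ∫ x, f x ∂μ) + 8 * C ^ 2 * klDiv μ ν := by ring
    _ ≤ 2 * ∫ x, x ^ 2 ∂μ + 8 * C ^ 2 * klDiv μ ν := by linarith
    _ ≤ (2 + 8 * C ^ 2) * ((∫ x, x ^ 2 ∂μ) + klDiv μ ν) := by nlinarith [sq_nonneg C]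
end

section
/- Let (X_1, X_2) and (Y_1, Y_2) be random vectors in R^2 with the same first marginal (Law(X_1) = Law(Y_1)). Then the Wasserstein-1 distance between the second marginals satisfies W_1(X_2, Y_2)^2 \le K (E[(X_1 - X_2)^2] \vee E[(Y_1 - Y_2)^2]) \cdot KL(X || Y) for a universal constant K, where KL(X||Y) is the KL divergence between the joint laws. -/
open MeasureTheory Real

/-- Wasserstein-1 distance on `ℝ`, as the infimum of the transport cost over couplings. -/
noncomputable def W1 (μ ν : Measure ℝ) : ℝ :=
  ⨅ (c : {c : Measure (ℝ × ℝ) // c.map Prod.fst = μ ∧ c.map Prod.snd = ν}),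
    ∫ z, |z.1 - z.2| ∂c.1

/-!
Let `ρ = dμ/dν`. Both laws share the part `min(ρ, 1) ν`, which is coupled with itself at zero
cost; the remainders `(ρ - 1)⁺ ν` and `(1 - ρ)⁺ ν` have the same first marginal, so they can be
glued conditionally independently given the first coordinate. By the triangle inequality through
that coordinate the glued coupling costs at most `∫ |x₁ - x₂| |ρ - 1| dν`. Writing
`|ρ - 1| = (√ρ + 1) |√ρ - 1|`, Cauchy–Schwarz bounds its square by
`2 ∫ |x₁ - x₂|² (ρ + 1) dν · ∫ (√ρ - 1)² dν`, and `(√ρ - 1)² ≤ ρ log ρ - ρ + 1`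
bounds the second factor by `KL(μ ‖ ν)`.
-/

open ProbabilityTheory

open InformationTheory in
theorem sq_sqrt_sub_one_le_klFun {t : ℝ} (ht : 0 ≤ t) : (√t - 1) ^ 2 ≤ klFun t := by
  rcases ht.eq_or_lt with rfl | ht
  · simp [klFun_zero]
  have hs : 0 < √t := sqrt_pos.2 ht
  have hlog : √t - 1 ≤ √t * log √t := by
    have := mul_le_mul_of_nonneg_left (one_sub_inv_le_log_of_pos hs) hs.le
    rwa [mul_sub, mul_one, mul_inv_cancel₀ hs.ne'] at this
  have hlogt : log t = 2 * log √t := by rw [log_sqrt ht.le]; ring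
  rw [klFun_apply, hlogt]
  nlinarith [mul_le_mul_of_nonneg_left hlog hs.le, sq_sqrt ht.le]

theorem sq_sqrt_add_one_le {t : ℝ} (ht : 0 ≤ t) : (√t + 1) ^ 2 ≤ 2 * (t + 1) := by
  nlinarith [sq_sqrt ht, sq_nonneg (√t - 1)]

theorem abs_sub_one_eq_mul_abs_sqrt_sub_one {t : ℝ} (ht : 0 ≤ t) :
    |t - 1| = (√t + 1) * |√t - 1| := by
  rw [← abs_of_pos (by positivity : 0 < √t + 1), ← abs_mul]
  congr 1
  nlinarith [sq_sqrt ht]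

theorem ENNReal.tsub_one_add_one_tsub {r : ENNReal} (hr : r ≠ ⊤) :
    (r - 1) + (1 - r) = ENNReal.ofReal |r.toReal - 1| := by
  rcases le_total r 1 with h | h
  · rw [tsub_eq_zero_of_le h, zero_add,
      abs_of_nonpos (by simpa using ENNReal.toReal_mono ENNReal.one_ne_top h), neg_sub,
      ENNReal.ofReal_sub _ ENNReal.toReal_nonneg, ENNReal.ofReal_one, ENNReal.ofReal_toReal hr]
  · rw [tsub_eq_zero_of_le h, add_zero, abs_of_nonneg (by simpa using ENNReal.toReal_mono hr h),
      ENNReal.ofReal_sub _ zero_le_one, ENNReal.ofReal_one, ENNReal.ofReal_toReal hr]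

theorem lintegral_mul_sq_le_sq_mul_sq {α : Type*} [MeasurableSpace α] (μ : Measure α)
    {f g : α → ENNReal} (hf : AEMeasurable f μ) (hg : AEMeasurable g μ) :
    (∫⁻ a, f a * g a ∂μ) ^ 2 ≤ (∫⁻ a, f a ^ 2 ∂μ) * ∫⁻ a, g a ^ 2 ∂μ := by
  have h := ENNReal.lintegral_mul_le_Lp_mul_Lq μ Real.HolderConjugate.two_two hf hg
  simp only [Pi.mul_apply, ENNReal.rpow_two] at h
  calc (∫⁻ a, f a * g a ∂μ) ^ 2
      ≤ ((∫⁻ a, f a ^ 2 ∂μ) ^ (1 / 2 : ℝ) * (∫⁻ a, g a ^ 2 ∂μ) ^ (1 / 2 : ℝ)) ^ 2 := by gcongr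
    _ = (∫⁻ a, f a ^ 2 ∂μ) * ∫⁻ a, g a ^ 2 ∂μ := by
      rw [mul_pow, ← ENNReal.rpow_natCast, ← ENNReal.rpow_natCast, ← ENNReal.rpow_mul,
        ← ENNReal.rpow_mul]
      norm_num

theorem lintegral_mul_ofReal_sqrt_rnDeriv_add_one_sq_le {α : Type*} [MeasurableSpace α]
    {μ ν : Measure α} [SigmaFinite μ] [μ.HaveLebesgueDecomposition ν] (hμν : μ ≪ ν)
    {f : α → ENNReal} (hf : Measurable f) :
    ∫⁻ x, (f x * ENNReal.ofReal (√(μ.rnDeriv ν x).toReal + 1)) ^ 2 ∂ν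
      ≤ 2 * (∫⁻ x, f x ^ 2 ∂μ + ∫⁻ x, f x ^ 2 ∂ν) := calc
  _ ≤ ∫⁻ x, 2 * (μ.rnDeriv ν x * f x ^ 2 + f x ^ 2) ∂ν := by
    refine lintegral_mono_ae ?_
    filter_upwards [μ.rnDeriv_lt_top ν] with x hx
    have h2 : ENNReal.ofReal (2 * ((μ.rnDeriv ν x).toReal + 1)) = 2 * (μ.rnDeriv ν x + 1) := by
      rw [ENNReal.ofReal_mul zero_le_two, ENNReal.ofReal_add ENNReal.toReal_nonneg zero_le_one,
        ENNReal.ofReal_toReal hx.ne, ENNReal.ofReal_ofNat, ENNReal.ofReal_one]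
    calc (f x * ENNReal.ofReal (√(μ.rnDeriv ν x).toReal + 1)) ^ 2
        = f x ^ 2 * ENNReal.ofReal ((√(μ.rnDeriv ν x).toReal + 1) ^ 2) := by
          rw [mul_pow, ENNReal.ofReal_pow (by positivity)]
      _ ≤ f x ^ 2 * ENNReal.ofReal (2 * ((μ.rnDeriv ν x).toReal + 1)) := by
          gcongr
          exact sq_sqrt_add_one_le ENNReal.toReal_nonneg
      _ = 2 * (μ.rnDeriv ν x * f x ^ 2 + f x ^ 2) := by rw [h2]; ring
  _ = 2 * (∫⁻ x, f x ^ 2 ∂μ + ∫⁻ x, f x ^ 2 ∂ν) := by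
    rw [lintegral_const_mul _ (by fun_prop), lintegral_add_left (by fun_prop),
      lintegral_rnDeriv_mul hμν (by fun_prop)]

section RnDeriv

variable {α : Type*} [MeasurableSpace α] {μ ν : Measure α} [IsFiniteMeasure μ] [IsFiniteMeasure ν]

theorem lintegral_ofReal_abs_sqrt_rnDeriv_sub_one_sq_le_klDiv (hμν : μ ≪ ν) :
    ∫⁻ x, ENNReal.ofReal |√(μ.rnDeriv ν x).toReal - 1| ^ 2 ∂ν ≤ InformationTheory.klDiv μ ν := by
  rw [InformationTheory.klDiv_eq_lintegral_klFun_of_ac hμν]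
  refine lintegral_mono fun x ↦ ?_
  rw [← ENNReal.ofReal_pow (abs_nonneg _), sq_abs]
  exact ENNReal.ofReal_le_ofReal (sq_sqrt_sub_one_le_klFun ENNReal.toReal_nonneg)

theorem sq_lintegral_tsub_add_tsub_mul_le_klDiv (hμν : μ ≪ ν)
    {f : α → ENNReal} (hf : Measurable f) :
    (∫⁻ x, (μ.rnDeriv ν x - 1 + (1 - μ.rnDeriv ν x)) * f x ∂ν) ^ 2
      ≤ 2 * (∫⁻ x, f x ^ 2 ∂μ + ∫⁻ x, f x ^ 2 ∂ν) * InformationTheory.klDiv μ ν := by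
  set t := fun x ↦ (μ.rnDeriv ν x).toReal
  have hsplit : ∀ᵐ x ∂ν, (μ.rnDeriv ν x - 1 + (1 - μ.rnDeriv ν x)) * f x
      = f x * ENNReal.ofReal (√(t x) + 1) * ENNReal.ofReal |√(t x) - 1| := by
    filter_upwards [μ.rnDeriv_lt_top ν] with x hx
    rw [ENNReal.tsub_one_add_one_tsub hx.ne,
      abs_sub_one_eq_mul_abs_sqrt_sub_one ENNReal.toReal_nonneg, ENNReal.ofReal_mul (by positivity)]
    ring
  calc (∫⁻ x, (μ.rnDeriv ν x - 1 + (1 - μ.rnDeriv ν x)) * f x ∂ν) ^ 2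
      = (∫⁻ x, f x * ENNReal.ofReal (√(t x) + 1) * ENNReal.ofReal |√(t x) - 1| ∂ν) ^ 2 := by
        rw [lintegral_congr_ae hsplit]
    _ ≤ (∫⁻ x, (f x * ENNReal.ofReal (√(t x) + 1)) ^ 2 ∂ν)
        * ∫⁻ x, ENNReal.ofReal |√(t x) - 1| ^ 2 ∂ν :=
        lintegral_mul_sq_le_sq_mul_sq ν (by fun_prop) (by fun_prop)
    _ ≤ _ := by
        gcongr
        · exact lintegral_mul_ofReal_sqrt_rnDeriv_add_one_sq_le hμν hf
        · exact lintegral_ofReal_abs_sqrt_rnDeriv_sub_one_sq_le_klDiv hμν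

end RnDeriv

theorem MeasureTheory.Measure.add_left_cancel_of_isFiniteMeasure {α : Type*} [MeasurableSpace α]
    {η a b : Measure α} [IsFiniteMeasure η] (h : η + a = η + b) : a = b := by
  ext s hs
  have := congrArg (· s) h
  simpa only [Measure.add_apply, ENNReal.add_right_inj (measure_ne_top η s)] using this

section Decomposition

variable {α : Type*} [MeasurableSpace α] {μ ν : Measure α}

theorem withDensity_min_rnDeriv_add_withDensity_rnDeriv_tsub [μ.HaveLebesgueDecomposition ν]
    (hμν : μ ≪ ν) :
    ν.withDensity (fun x ↦ min (μ.rnDeriv ν x) 1) + ν.withDensity (fun x ↦ μ.rnDeriv ν x - 1)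
      = μ := by
  rw [← withDensity_add_left ((μ.measurable_rnDeriv ν).min measurable_const)]
  conv_rhs => rw [← Measure.withDensity_rnDeriv_eq μ ν hμν]
  congr 1
  funext x
  exact (add_comm _ _).trans tsub_add_min

theorem withDensity_min_rnDeriv_add_withDensity_tsub_rnDeriv :
    ν.withDensity (fun x ↦ min (μ.rnDeriv ν x) 1) + ν.withDensity (fun x ↦ 1 - μ.rnDeriv ν x)
      = ν := by
  rw [← withDensity_add_left ((μ.measurable_rnDeriv ν).min measurable_const)]
  conv_rhs => rw [← withDensity_one (μ := ν)]
  congr 1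
  funext x
  exact (add_comm _ _).trans ((congrArg _ (min_comm _ _)).trans tsub_add_min)

end Decomposition

section Coupling

variable {Ω : Type*} [PseudoEMetricSpace Ω] [MeasurableSpace Ω] [BorelSpace Ω]
  [SecondCountableTopology Ω] [StandardBorelSpace Ω] [Nonempty Ω]

theorem exists_coupling_lintegral_edist_le_of_fst_eq (a b : Measure (Ω × Ω))
    [IsFiniteMeasure a] [IsFiniteMeasure b] (h : a.fst = b.fst) :
    ∃ c : Measure (Ω × Ω), c.fst = a.snd ∧ c.snd = b.snd ∧
      ∫⁻ p, edist p.1 p.2 ∂c ≤ ∫⁻ p, edist p.1 p.2 ∂a + ∫⁻ p, edist p.1 p.2 ∂b := by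
  have ha : a.fst ⊗ₘ a.condKernel = a := a.disintegrate _
  have hb : a.fst ⊗ₘ b.condKernel = b := h ▸ b.disintegrate _
  refine ⟨(a.condKernel ×ₖ b.condKernel) ∘ₘ a.fst, ?_, ?_, ?_⟩
  · rw [Measure.fst, Measure.map_comp _ _ measurable_fst, ← Kernel.fst_eq, Kernel.fst_prod,
      ← Measure.snd_compProd, ha]
  · rw [Measure.snd, Measure.map_comp _ _ measurable_snd, ← Kernel.snd_eq, Kernel.snd_prod,
      ← Measure.snd_compProd, hb]
  · conv_rhs => rw [← ha, ← hb]
    rw [Measure.lintegral_bind (Kernel.aemeasurable _) measurable_edist.aemeasurable,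
      Measure.lintegral_compProd measurable_edist, Measure.lintegral_compProd measurable_edist,
      ← lintegral_add_left (measurable_edist.lintegral_kernel_prod_right' (κ := a.condKernel))]
    refine lintegral_mono fun x => ?_
    rw [Kernel.prod_apply, lintegral_prod _ measurable_edist.aemeasurable]
    calc ∫⁻ y₁, ∫⁻ y₂, edist y₁ y₂ ∂b.condKernel x ∂a.condKernel x
        ≤ ∫⁻ y₁, ∫⁻ y₂, (edist x y₁ + edist x y₂) ∂b.condKernel x ∂a.condKernel x := by
          gcongr with y₁ y₂
          exact edist_triangle_left _ _ _
      _ = ∫⁻ y, edist x y ∂a.condKernel x + ∫⁻ y, edist x y ∂b.condKernel x := by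
          have hm : Measurable (edist x) := measurable_const.edist measurable_id
          simp only [lintegral_add_right _ hm, lintegral_const, measure_univ, mul_one]
          rw [lintegral_add_left hm, lintegral_const, measure_univ, mul_one]

theorem exists_coupling_lintegral_edist_le_of_ac (μ ν : Measure (Ω × Ω))
    [IsFiniteMeasure μ] [IsFiniteMeasure ν] (hμν : μ ≪ ν) (h : μ.fst = ν.fst) :
    ∃ c : Measure (Ω × Ω), c.fst = μ.snd ∧ c.snd = ν.snd ∧
      ∫⁻ p, edist p.1 p.2 ∂c
        ≤ ∫⁻ z, (μ.rnDeriv ν z - 1 + (1 - μ.rnDeriv ν z)) * edist z.1 z.2 ∂ν := by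
  set η := ν.withDensity (fun z ↦ min (μ.rnDeriv ν z) 1)
  set a := ν.withDensity (fun z ↦ μ.rnDeriv ν z - 1)
  set b := ν.withDensity (fun z ↦ 1 - μ.rnDeriv ν z)
  have hμ : η + a = μ := withDensity_min_rnDeriv_add_withDensity_rnDeriv_tsub hμν
  have hν : η + b = ν := withDensity_min_rnDeriv_add_withDensity_tsub_rnDeriv
  have : IsFiniteMeasure η := isFiniteMeasure_of_le μ (hμ ▸ Measure.le_add_right le_rfl)
  have : IsFiniteMeasure a := isFiniteMeasure_of_le μ (hμ ▸ Measure.le_add_left le_rfl)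
  have : IsFiniteMeasure b := isFiniteMeasure_of_le ν (hν ▸ Measure.le_add_left le_rfl)
  have hab : a.fst = b.fst :=
    Measure.add_left_cancel_of_isFiniteMeasure (η := η.fst) (by rw [← Measure.fst_add,
      ← Measure.fst_add, hμ, hν, h])
  obtain ⟨c, hc₁, hc₂, hc⟩ := exists_coupling_lintegral_edist_le_of_fst_eq a b hab
  have hdiag : Measurable fun z : Ω × Ω ↦ (z.2, z.2) := by fun_prop
  refine ⟨η.map (fun z ↦ (z.2, z.2)) + c, ?_, ?_, ?_⟩
  · rw [Measure.fst_add, hc₁, Measure.fst, Measure.map_map measurable_fst hdiag, ← hμ,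
      Measure.snd_add]
    rfl
  · rw [Measure.snd_add, hc₂, Measure.snd, Measure.map_map measurable_snd hdiag, ← hν,
      Measure.snd_add]
    rfl
  · have hη : ∫⁻ p, edist p.1 p.2 ∂(η.map fun z ↦ (z.2, z.2)) = 0 := by
      simp [lintegral_map measurable_edist hdiag]
    have ha : Measurable fun z ↦ μ.rnDeriv ν z - 1 := by fun_prop
    have hb : Measurable fun z ↦ 1 - μ.rnDeriv ν z := by fun_prop
    rw [lintegral_add_measure, hη, zero_add]
    refine hc.trans_eq ?_
    rw [lintegral_withDensity_eq_lintegral_mul _ ha measurable_edist,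
      lintegral_withDensity_eq_lintegral_mul _ hb measurable_edist,
      ← lintegral_add_left (ha.mul measurable_edist)]
    simp only [Pi.mul_apply, add_mul]

theorem exists_coupling_sq_lintegral_edist_le (μ ν : Measure (Ω × Ω)) [IsFiniteMeasure μ] [IsFiniteMeasure ν]
    (hμν : μ ≪ ν) (h : μ.fst = ν.fst) :
    ∃ c : Measure (Ω × Ω), c.fst = μ.snd ∧ c.snd = ν.snd ∧
      (∫⁻ p, edist p.1 p.2 ∂c) ^ 2
        ≤ 2 * (∫⁻ z, edist z.1 z.2 ^ 2 ∂μ + ∫⁻ z, edist z.1 z.2 ^ 2 ∂ν)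
          * InformationTheory.klDiv μ ν :=
  let ⟨c, hc₁, hc₂, hc⟩ := exists_coupling_lintegral_edist_le_of_ac μ ν hμν h
  ⟨c, hc₁, hc₂, (pow_le_pow_left₀ zero_le hc 2).trans
    (sq_lintegral_tsub_add_tsub_mul_le_klDiv hμν measurable_edist)⟩

end Coupling

theorem W1_nonneg (μ ν : Measure ℝ) : 0 ≤ W1 μ ν :=
  Real.iInf_nonneg fun _ ↦ integral_nonneg fun _ ↦ abs_nonneg _

theorem W1_le_toReal_lintegral_edist {μ ν : Measure ℝ} (c : Measure (ℝ × ℝ))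
    (h₁ : c.map Prod.fst = μ) (h₂ : c.map Prod.snd = ν) :
    W1 μ ν ≤ (∫⁻ p, edist p.1 p.2 ∂c).toReal := by
  have hbdd : BddBelow (Set.range fun c : {c : Measure (ℝ × ℝ) //
      c.map Prod.fst = μ ∧ c.map Prod.snd = ν} ↦ ∫ z, |z.1 - z.2| ∂c.1) :=
    ⟨0, by rintro _ ⟨c, rfl⟩; exact integral_nonneg fun _ ↦ abs_nonneg _⟩
  refine (ciInf_le hbdd ⟨c, h₁, h₂⟩).trans_eq ?_
  rw [integral_eq_lintegral_of_nonneg_ae (ae_of_all _ fun _ ↦ abs_nonneg _) (by fun_prop)]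
  simp only [edist_dist, Real.dist_eq]

theorem lintegral_edist_sq_eq_ofReal_integral {μ : Measure (ℝ × ℝ)}
    (h : Integrable (fun z : ℝ × ℝ ↦ (z.1 - z.2) ^ 2) μ) :
    ∫⁻ z, edist z.1 z.2 ^ 2 ∂μ = ENNReal.ofReal (∫ z, (z.1 - z.2) ^ 2 ∂μ) := by
  rw [ofReal_integral_eq_lintegral_ofReal h (ae_of_all _ fun _ ↦ sq_nonneg _)]
  simp only [edist_dist, Real.dist_eq, ← ENNReal.ofReal_pow (abs_nonneg _), sq_abs]

theorem klDiv_eq_toReal_klDiv {α : Type*} [MeasurableSpace α] {μ ν : Measure α}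
    [IsFiniteMeasure μ] [IsFiniteMeasure ν] (hμν : μ ≪ ν) (h : μ Set.univ = ν Set.univ) :
    klDiv μ ν = (InformationTheory.klDiv μ ν).toReal :=
  (InformationTheory.toReal_klDiv_of_measure_eq hμν h).symm

/-- If the joint laws `μ` of `(X₁,X₂)` and `ν` of `(Y₁,Y₂)` have the same first marginal, then
`W₁(X₂, Y₂)² ≤ K · (E[(X₁-X₂)²] ∨ E[(Y₁-Y₂)²]) · KL(μ ‖ ν)` for a universal constant `K`
(assuming `μ ≪ ν`, finite KL divergence, and finite second moments of the increments). -/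
theorem w1_kl_bound :
    ∃ K : ℝ, 0 < K ∧ ∀ (μ ν : Measure (ℝ × ℝ)),
      IsProbabilityMeasure μ → IsProbabilityMeasure ν →
      μ.map Prod.fst = ν.map Prod.fst →
      μ ≪ ν →
      Integrable (fun z => Real.log ((μ.rnDeriv ν z).toReal)) μ →
      Integrable (fun z : ℝ × ℝ => (z.1 - z.2) ^ 2) μ →
      Integrable (fun z : ℝ × ℝ => (z.1 - z.2) ^ 2) ν →
      W1 (μ.map Prod.snd) (ν.map Prod.snd) ^ 2
        ≤ K * max (∫ z, (z.1 - z.2) ^ 2 ∂μ) (∫ z, (z.1 - z.2) ^ 2 ∂ν) * klDiv μ ν := by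
  refine ⟨4, by norm_num, fun μ ν _ _ hfst hμν hllr hIμ hIν => ?_⟩
  obtain ⟨c, hc₁, hc₂, hc⟩ := exists_coupling_sq_lintegral_edist_le μ ν hμν hfst
  rw [lintegral_edist_sq_eq_ofReal_integral hIμ, lintegral_edist_sq_eq_ofReal_integral hIν] at hc
  have hfin : InformationTheory.klDiv μ ν ≠ ⊤ := InformationTheory.klDiv_ne_top hμν hllr
  have hkl : klDiv μ ν = (InformationTheory.klDiv μ ν).toReal :=
    klDiv_eq_toReal_klDiv hμν (by simp)
  set Iμ := ∫ z, (z.1 - z.2) ^ 2 ∂μ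
  set Iν := ∫ z, (z.1 - z.2) ^ 2 ∂ν
  calc W1 (μ.map Prod.snd) (ν.map Prod.snd) ^ 2
      ≤ (∫⁻ p, edist p.1 p.2 ∂c).toReal ^ 2 :=
        pow_le_pow_left₀ (W1_nonneg _ _) (W1_le_toReal_lintegral_edist c hc₁ hc₂) 2
    _ ≤ (2 * (ENNReal.ofReal Iμ + ENNReal.ofReal Iν) * InformationTheory.klDiv μ ν).toReal := by
        rw [← ENNReal.toReal_pow]
        exact ENNReal.toReal_mono (by finiteness) hc
    _ = 2 * (Iμ + Iν) * klDiv μ ν := by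
        rw [hkl, ENNReal.toReal_mul, ENNReal.toReal_mul,
          ENNReal.toReal_add ENNReal.ofReal_ne_top ENNReal.ofReal_ne_top,
          ENNReal.toReal_ofReal (integral_nonneg fun _ ↦ sq_nonneg _),
          ENNReal.toReal_ofReal (integral_nonneg fun _ ↦ sq_nonneg _), ENNReal.toReal_ofNat]
    _ ≤ 4 * max Iμ Iν * klDiv μ ν :=
        mul_le_mul_of_nonneg_right (by linarith [le_max_left Iμ Iν, le_max_right Iμ Iν])
          (hkl ▸ ENNReal.toReal_nonneg)
end

section
/- Let X and Y be atomless real random variables with densities p and q. Then for every a \in R, W_1(X, Y) \le \int_R |x - a| |p(x) - q(x)| dx. -/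
open MeasureTheory Real

/-!
Write `p = min p q + (p - q)⁺` and `q = min p q + (p - q)⁻`. Leave the common mass `min p q`
in place (cost `0`) and couple the two excess masses, which have the same total, independently.
Routing every unit of mass through `a`, i.e. `|x - y| ≤ |x - a| + |y - a|`, the independent part
costs at most `∫ |x - a| (p - q)⁺ + ∫ |y - a| (p - q)⁻ = ∫ |x - a| |p - q|`.
-/

namespace MeasureTheory

variable {X Y : Type*} [MeasurableSpace X] [MeasurableSpace Y]

def IsCoupling (c : Measure (X × Y)) (μ : Measure X) (ν : Measure Y) : Prop :=
  c.map Prod.fst = μ ∧ c.map Prod.snd = ν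

lemma isCoupling_map_diag (μ : Measure X) : IsCoupling (μ.map fun x => (x, x)) μ μ := by
  have hdiag : Measurable fun x : X => (x, x) := measurable_id.prodMk measurable_id
  rw [IsCoupling, Measure.map_map measurable_fst hdiag, Measure.map_map measurable_snd hdiag]
  exact ⟨Measure.map_id, Measure.map_id⟩

lemma isCoupling_smul_prod {μ : Measure X} {ν : Measure Y} [IsFiniteMeasure μ]
    [IsFiniteMeasure ν] (hmass : μ Set.univ = ν Set.univ) :
    IsCoupling ((ν Set.univ)⁻¹ • μ.prod ν) μ ν := by
  rcases eq_or_ne (ν Set.univ) 0 with h0 | h0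
  · obtain rfl : μ = 0 := Measure.measure_univ_eq_zero.1 (hmass.trans h0)
    obtain rfl : ν = 0 := Measure.measure_univ_eq_zero.1 h0
    simp [IsCoupling]
  · have hcancel : (ν Set.univ)⁻¹ * ν Set.univ = 1 :=
      ENNReal.inv_mul_cancel h0 (measure_ne_top ν _)
    constructor
    · rw [Measure.map_smul, Measure.map_fst_prod, smul_smul, hcancel, one_smul]
    · rw [Measure.map_smul, Measure.map_snd_prod, hmass, smul_smul, hcancel, one_smul]

namespace IsCoupling

variable {c c' : Measure (X × Y)} {μ μ' : Measure X} {ν ν' : Measure Y}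
  {E : Type*} [NormedAddCommGroup E]

lemma add (h : IsCoupling c μ ν) (h' : IsCoupling c' μ' ν') :
    IsCoupling (c + c') (μ + μ') (ν + ν') := by
  rw [IsCoupling, Measure.map_add _ _ measurable_fst, Measure.map_add _ _ measurable_snd,
    h.1, h.2, h'.1, h'.2]
  exact ⟨rfl, rfl⟩

lemma integrable_comp_fst_iff (h : IsCoupling c μ ν) {g : X → E}
    (hg : AEStronglyMeasurable g μ) : Integrable (fun z => g z.1) c ↔ Integrable g μ := by
  rw [← h.1] at hg ⊢
  exact (integrable_map_measure hg measurable_fst.aemeasurable).symm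

lemma integrable_comp_snd_iff (h : IsCoupling c μ ν) {g : Y → E}
    (hg : AEStronglyMeasurable g ν) : Integrable (fun z => g z.2) c ↔ Integrable g ν := by
  rw [← h.2] at hg ⊢
  exact (integrable_map_measure hg measurable_snd.aemeasurable).symm

lemma integral_comp_fst [NormedSpace ℝ E] (h : IsCoupling c μ ν) {g : X → E}
    (hg : AEStronglyMeasurable g μ) :
    ∫ z, g z.1 ∂c = ∫ x, g x ∂μ := by
  rw [← h.1] at hg ⊢
  exact (integral_map measurable_fst.aemeasurable hg).symm

lemma integral_comp_snd [NormedSpace ℝ E] (h : IsCoupling c μ ν) {g : Y → E}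
    (hg : AEStronglyMeasurable g ν) :
    ∫ z, g z.2 ∂c = ∫ y, g y ∂ν := by
  rw [← h.2] at hg ⊢
  exact (integral_map measurable_snd.aemeasurable hg).symm

end IsCoupling

end MeasureTheory

lemma W1_le_integral_of_isCoupling {c : Measure (ℝ × ℝ)} {μ ν : Measure ℝ}
    (h : IsCoupling c μ ν) : W1 μ ν ≤ ∫ z, |z.1 - z.2| ∂c := by
  unfold W1
  refine ciInf_le ⟨0, ?_⟩ (⟨c, h⟩ : {c // IsCoupling c μ ν})
  rintro _ ⟨c, rfl⟩
  exact integral_nonneg fun z => abs_nonneg _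

lemma integrable_abs_sub_map_diag (μ : Measure ℝ) :
    Integrable (fun z : ℝ × ℝ => |z.1 - z.2|) (μ.map fun x => (x, x)) := by
  rw [integrable_map_measure (by fun_prop) (by fun_prop)]
  simp [Function.comp_def]

lemma integral_abs_sub_map_diag (μ : Measure ℝ) :
    ∫ z, |z.1 - z.2| ∂(μ.map fun x => (x, x)) = 0 := by
  rw [integral_map (by fun_prop) (by fun_prop)]
  simp

lemma abs_sub_le_abs_sub_add_abs_sub (x y a : ℝ) : |x - y| ≤ |x - a| + |y - a| := by
  simpa only [Real.dist_eq] using dist_triangle_right x y a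

namespace MeasureTheory.IsCoupling

variable {c : Measure (ℝ × ℝ)} {μ ν : Measure ℝ} {a : ℝ}

lemma integrable_abs_sub (h : IsCoupling c μ ν) (hμ : Integrable (fun x => |x - a|) μ)
    (hν : Integrable (fun x => |x - a|) ν) :
    Integrable (fun z : ℝ × ℝ => |z.1 - z.2|) c :=
  (((h.integrable_comp_fst_iff (by fun_prop)).2 hμ).add
      ((h.integrable_comp_snd_iff (by fun_prop)).2 hν)).mono' (by fun_prop)
    (ae_of_all _ fun z => by
      rw [Real.norm_eq_abs, abs_abs]; exact abs_sub_le_abs_sub_add_abs_sub z.1 z.2 a)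

lemma integral_abs_sub_le (h : IsCoupling c μ ν) (hμ : Integrable (fun x => |x - a|) μ)
    (hν : Integrable (fun x => |x - a|) ν) :
    ∫ z, |z.1 - z.2| ∂c ≤ ∫ x, |x - a| ∂μ + ∫ x, |x - a| ∂ν := by
  have hfst := (h.integrable_comp_fst_iff (by fun_prop)).2 hμ
  have hsnd := (h.integrable_comp_snd_iff (by fun_prop)).2 hν
  calc ∫ z, |z.1 - z.2| ∂c ≤ ∫ z, (|z.1 - a| + |z.2 - a|) ∂c :=
        integral_mono (h.integrable_abs_sub hμ hν) (hfst.add hsnd) fun z =>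
          abs_sub_le_abs_sub_add_abs_sub z.1 z.2 a
    _ = ∫ x, |x - a| ∂μ + ∫ x, |x - a| ∂ν := by
        rw [integral_add hfst hsnd, h.integral_comp_fst (g := fun x => |x - a|) (by fun_prop),
          h.integral_comp_snd (g := fun y => |y - a|) (by fun_prop)]

end MeasureTheory.IsCoupling

theorem W1_add_le {m α β : Measure ℝ} [IsFiniteMeasure α] [IsFiniteMeasure β]
    (hmass : α Set.univ = β Set.univ) {a : ℝ} (hα : Integrable (fun x => |x - a|) α)
    (hβ : Integrable (fun x => |x - a|) β) :
    W1 (m + α) (m + β) ≤ ∫ x, |x - a| ∂α + ∫ x, |x - a| ∂β := by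
  have hc := isCoupling_smul_prod hmass
  calc W1 (m + α) (m + β)
      ≤ ∫ z, |z.1 - z.2| ∂(m.map (fun x => (x, x)) + (β Set.univ)⁻¹ • α.prod β) :=
        W1_le_integral_of_isCoupling ((isCoupling_map_diag m).add hc)
    _ = ∫ z, |z.1 - z.2| ∂((β Set.univ)⁻¹ • α.prod β) := by
        rw [integral_add_measure (integrable_abs_sub_map_diag m) (hc.integrable_abs_sub hα hβ),
          integral_abs_sub_map_diag, zero_add]
    _ ≤ ∫ x, |x - a| ∂α + ∫ x, |x - a| ∂β := hc.integral_abs_sub_le hα hβ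

lemma min_add_posPart_sub (x y : ℝ) : min x y + (x - y)⁺ = x := by
  rw [show min x y = x ⊓ y from rfl, inf_eq_sub_posPart_sub, sub_add_cancel]

lemma min_add_negPart_sub (x y : ℝ) : min x y + (x - y)⁻ = y := by
  rw [← neg_sub, negPart_neg, min_comm, show min y x = y ⊓ x from rfl, inf_eq_sub_posPart_sub,
    sub_add_cancel]

section WithDensityOfReal

variable {X : Type*} [MeasurableSpace X] {μ : Measure X} {f g : X → ℝ}

lemma withDensity_ofReal_add (hf : Measurable f) (hf0 : 0 ≤ f) (hg0 : 0 ≤ g) :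
    μ.withDensity (fun x => ENNReal.ofReal (f x + g x))
      = μ.withDensity (fun x => ENNReal.ofReal (f x))
        + μ.withDensity (fun x => ENNReal.ofReal (g x)) := by
  simp_rw [ENNReal.ofReal_add (hf0 _) (hg0 _)]
  exact withDensity_add_left hf.ennreal_ofReal _

lemma withDensity_ofReal_apply_univ (hf : Integrable f μ) (hf0 : 0 ≤ f) :
    μ.withDensity (fun x => ENNReal.ofReal (f x)) Set.univ = ENNReal.ofReal (∫ x, f x ∂μ) := by
  rw [withDensity_apply _ MeasurableSet.univ, Measure.restrict_univ,
    ofReal_integral_eq_lintegral_ofReal hf (ae_of_all _ hf0)]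

lemma integrable_withDensity_ofReal_iff (hf : Measurable f) (hf0 : 0 ≤ f) :
    Integrable g (μ.withDensity fun x => ENNReal.ofReal (f x))
      ↔ Integrable (fun x => f x * g x) μ := by
  rw [integrable_withDensity_iff_integrable_smul' hf.ennreal_ofReal
    (ae_of_all _ fun _ => ENNReal.ofReal_lt_top)]
  simp only [ENNReal.toReal_ofReal (hf0 _), smul_eq_mul]

lemma integral_withDensity_ofReal (hf : Measurable f) (hf0 : 0 ≤ f) (g : X → ℝ) :
    ∫ x, g x ∂μ.withDensity (fun x => ENNReal.ofReal (f x)) = ∫ x, f x * g x ∂μ := by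
  rw [integral_withDensity_eq_integral_toReal_smul hf.ennreal_ofReal
    (ae_of_all _ fun _ => ENNReal.ofReal_lt_top)]
  simp only [ENNReal.toReal_ofReal (hf0 _), smul_eq_mul]

lemma withDensity_ofReal_eq_min_add_posPart (hf : Measurable f) (hg : Measurable g)
    (hf0 : 0 ≤ f) (hg0 : 0 ≤ g) :
    μ.withDensity (fun x => ENNReal.ofReal (f x))
      = μ.withDensity (fun x => ENNReal.ofReal (min (f x) (g x)))
        + μ.withDensity (fun x => ENNReal.ofReal (f x - g x)⁺) := by
  rw [← withDensity_ofReal_add (hf.min hg) (fun x => le_min (hf0 x) (hg0 x))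
    (fun x => posPart_nonneg _)]
  simp_rw [min_add_posPart_sub]

lemma withDensity_ofReal_eq_min_add_negPart (hf : Measurable f) (hg : Measurable g)
    (hf0 : 0 ≤ f) (hg0 : 0 ≤ g) :
    μ.withDensity (fun x => ENNReal.ofReal (g x))
      = μ.withDensity (fun x => ENNReal.ofReal (min (f x) (g x)))
        + μ.withDensity (fun x => ENNReal.ofReal (f x - g x)⁻) := by
  rw [← withDensity_ofReal_add (hf.min hg) (fun x => le_min (hf0 x) (hg0 x))
    (fun x => negPart_nonneg _)]
  simp_rw [min_add_negPart_sub]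

lemma withDensity_ofReal_posPart_add_negPart (hf : Measurable f) (hg : Measurable g) :
    μ.withDensity (fun x => ENNReal.ofReal (f x - g x)⁺)
        + μ.withDensity (fun x => ENNReal.ofReal (f x - g x)⁻)
      = μ.withDensity (fun x => ENNReal.ofReal |f x - g x|) := by
  rw [← withDensity_ofReal_add (f := fun x => (f x - g x)⁺) ((hf.sub hg).max measurable_const)
    (fun x => posPart_nonneg _) (fun x => negPart_nonneg _)]
  simp_rw [posPart_add_negPart]

end WithDensityOfReal

/-- For atomless real random variables `X`, `Y` with densities `p`, `q` (with respect to
Lebesgue measure), for every `a ∈ ℝ`: `W₁(X, Y) ≤ ∫ |x - a| |p(x) - q(x)| dx`. -/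
theorem w1_weighted_tv_bound
    (p q : ℝ → ℝ) (hp0 : ∀ x, 0 ≤ p x) (hq0 : ∀ x, 0 ≤ q x)
    (hpm : Measurable p) (hqm : Measurable q)
    (hpint : ∫ x, p x = 1) (hqint : ∫ x, q x = 1)
    (a : ℝ)
    (hint : Integrable (fun x => |x - a| * |p x - q x|)) :
    W1 (volume.withDensity (fun x => ENNReal.ofReal (p x)))
       (volume.withDensity (fun x => ENNReal.ofReal (q x)))
      ≤ ∫ x, |x - a| * |p x - q x| := by
  have hpI : Integrable p := .of_integral_ne_zero (by rw [hpint]; exact one_ne_zero)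
  have hqI : Integrable q := .of_integral_ne_zero (by rw [hqint]; exact one_ne_zero)
  have hμ := withDensity_ofReal_eq_min_add_posPart (μ := volume) hpm hqm hp0 hq0
  have hν := withDensity_ofReal_eq_min_add_negPart (μ := volume) hpm hqm hp0 hq0
  have hαβ := withDensity_ofReal_posPart_add_negPart (μ := volume) hpm hqm
  set m := volume.withDensity fun x => ENNReal.ofReal (min (p x) (q x))
  set α := volume.withDensity fun x => ENNReal.ofReal (p x - q x)⁺
  set β := volume.withDensity fun x => ENNReal.ofReal (p x - q x)⁻
  have : IsFiniteMeasure m := isFiniteMeasure_withDensity_ofReal (hpI.inf hqI).2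
  have : IsFiniteMeasure α := isFiniteMeasure_withDensity_ofReal (hpI.sub hqI).pos_part.2
  have : IsFiniteMeasure β := isFiniteMeasure_withDensity_ofReal (hpI.sub hqI).neg_part.2
  have hmass : α Set.univ = β Set.univ := by
    rw [← ENNReal.add_right_inj (measure_ne_top m Set.univ), ← Measure.add_apply,
      ← Measure.add_apply, ← hμ, ← hν, withDensity_ofReal_apply_univ hpI hp0,
      withDensity_ofReal_apply_univ hqI hq0, hpint, hqint]
  have hint_αβ : Integrable (fun x => |x - a|) (α + β) := by
    rw [hαβ, integrable_withDensity_ofReal_iff (by fun_prop) (fun x => abs_nonneg _)]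
    simpa only [mul_comm] using hint
  obtain ⟨hα, hβ⟩ := integrable_add_measure.1 hint_αβ
  calc _ = W1 (m + α) (m + β) := by rw [hμ, hν]
    _ ≤ ∫ x, |x - a| ∂α + ∫ x, |x - a| ∂β := W1_add_le hmass hα hβ
    _ = ∫ x, |x - a| ∂(α + β) := (integral_add_measure hα hβ).symm
    _ = ∫ x, |x - a| * |p x - q x| := by
      rw [hαβ, integral_withDensity_ofReal (by fun_prop) (fun x => abs_nonneg _)]
      simp only [mul_comm]
end
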